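/- Let σ ∈ Σ_{n_0}. (a) If σ_1 = σ_{2n_0} = 1 and χ^σ(1) ≥ 0, or if σ_1 = σ_{2n_0} = −1 and χ^σ(1) ≤ 0, then the function |χ^σ| attains a local maximum at some point of (0,1) (so the corresponding branch of equilibria undergoes a supercritical saddle-node bifurcation at K = a/|χ^σ(ξ_0)|, ξ_0 the local maximizer). (b) If σ_i = 1 for all i ∈ {1,…,2n_0}, then χ^σ(ξ) > 0 on (0,1], the derivative dχ^σ/dξ is strictly decreasing on (0,1) and tends to −∞ as ξ → 1, and χ^σ has exactly one local maximum and no local minimum on (0,1). -/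

import Mathlib

open Real Set Filter

/-- coefficient of the natural frequency of the `i`-th oscillator (0-indexed) in the reduced system:
`i - n0` for `i < n0` (paper's `i - n0 - 1`, 1-indexed) and `i - n0 + 1` otherwise. -/
noncomputable def redCoeff (n0 : ℕ) (i : Fin (2 * n0)) : ℝ :=
  if (i : ℕ) < n0 then (i : ℕ) - (n0 : ℝ) else (i : ℕ) - (n0 : ℝ) + 1

/-- right-hand side of the reduced Kuramoto system on `𝕋^{2 n0}` (with `n = 2 n0 + 1`, `ν = a/n`). -/
noncomputable def redField (n0 : ℕ) (a K : ℝ) (v : Fin (2 * n0) → ℝ) (i : Fin (2 * n0)) : ℝ :=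
  redCoeff n0 i * (a / (2 * (n0 : ℝ) + 1)) -
    (K / (2 * (n0 : ℝ) + 1)) *
      (2 * Real.sin (v i) +
        ∑ j ∈ Finset.univ.erase i, (Real.sin (v j) - Real.sin (v j - v i)))

/-- the function `χ^σ`. -/
noncomputable def chi (n0 : ℕ) (σ : Fin (2 * n0) → ℝ) (ξ : ℝ) : ℝ :=
  (ξ / n0) * (1 + ∑ i, σ i * Real.sqrt (1 - (redCoeff n0 i * ξ / n0) ^ 2))

/-- the function `h^σ`. -/
noncomputable def hSigma (n0 : ℕ) (σ : Fin (2 * n0) → ℝ) (ξ : ℝ) : ℝ :=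
  (1 / n0) * ∑ i, σ i * (redCoeff n0 i / n0) ^ 2 /
    Real.sqrt (1 - (redCoeff n0 i * ξ / n0) ^ 2)

/-- the consistency equation for `Ĉ^σ`. -/
def ConsistentC (n0 : ℕ) (a K : ℝ) (σ : Fin (2 * n0) → ℝ) (C : ℝ) : Prop :=
  C ≠ 0 ∧
  (∀ i, |redCoeff n0 i * a / ((2 * (n0 : ℝ) + 1) * K * C)| ≤ 1) ∧
  C = (1 / (2 * (n0 : ℝ) + 1)) *
    (1 + ∑ i, σ i * Real.sqrt (1 - (redCoeff n0 i * a / ((2 * (n0 : ℝ) + 1) * K * C)) ^ 2))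

/-- the angles `φ_i = arcsin((i−n0−1)a/(nKĈ))` resp. `arcsin((i−n0)a/(nKĈ))`. -/
noncomputable def phiC (n0 : ℕ) (a K C : ℝ) (i : Fin (2 * n0)) : ℝ :=
  Real.arcsin (redCoeff n0 i * a / ((2 * (n0 : ℝ) + 1) * K * C))

/-- the angles `φ_i = ± ξ`-parametrized version. -/
noncomputable def phiXi (n0 : ℕ) (s ξ : ℝ) (i : Fin (2 * n0)) : ℝ :=
  s * Real.arcsin (redCoeff n0 i * ξ / n0)

/-- the point `v^σ` built from signs `σ` and angles `φ`. -/
noncomputable def vSigma (n0 : ℕ) (σ : Fin (2 * n0) → ℝ) (φ : Fin (2 * n0) → ℝ)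
    (i : Fin (2 * n0)) : ℝ :=
  if σ i = 1 then φ i else if 0 < φ i then π - φ i else -φ i - π

/-- `v` is a solution of the reduced Kuramoto system. -/
def IsRedSol (n0 : ℕ) (a K : ℝ) (v : ℝ → Fin (2 * n0) → ℝ) : Prop :=
  ∀ t : ℝ, ∀ i, HasDerivAt (fun s => v s i) (redField n0 a K (v t) i) t

/-- Lyapunov stability of an equilibrium of the reduced Kuramoto system. -/
def RedStable (n0 : ℕ) (a K : ℝ) (vstar : Fin (2 * n0) → ℝ) : Prop :=
  ∀ ε > 0, ∃ δ > 0, ∀ v : ℝ → Fin (2 * n0) → ℝ, IsRedSol n0 a K v →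
    dist (v 0) vstar < δ → ∀ t ≥ 0, dist (v t) vstar < ε

/-- asymptotic stability of an equilibrium of the reduced Kuramoto system. -/
def RedAsympStable (n0 : ℕ) (a K : ℝ) (vstar : Fin (2 * n0) → ℝ) : Prop :=
  RedStable n0 a K vstar ∧
  ∃ δ > 0, ∀ v : ℝ → Fin (2 * n0) → ℝ, IsRedSol n0 a K v →
    dist (v 0) vstar < δ → Tendsto (fun t => v t) atTop (nhds vstar)


/-! ### Auxiliary lemmas for the proof of Statement 10 -/

lemma redCoeff_abs_le (n0 : ℕ) (i : Fin (2 * n0)) : |redCoeff n0 i| ≤ n0 := by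
  have hi := i.isLt
  have h2 : ((i:ℕ):ℝ) + 1 ≤ 2 * n0 := by exact_mod_cast Nat.succ_le_of_lt hi
  have h0 : (0:ℝ) ≤ ((i:ℕ):ℝ) := Nat.cast_nonneg _
  rw [abs_le]; unfold redCoeff
  split <;> rename_i h
  · have : ((i:ℕ):ℝ) < n0 := by exact_mod_cast h
    constructor <;> linarith
  · have : (n0:ℝ) ≤ ((i:ℕ):ℝ) := by exact_mod_cast Nat.le_of_not_lt h
    constructor <;> linarith

lemma redCoeff_abs_ge (n0 : ℕ) (i : Fin (2 * n0)) : 1 ≤ |redCoeff n0 i| := by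
  have hi := i.isLt
  have h2 : ((i:ℕ):ℝ) + 1 ≤ 2 * n0 := by exact_mod_cast Nat.succ_le_of_lt hi
  have h0 : (0:ℝ) ≤ ((i:ℕ):ℝ) := Nat.cast_nonneg _
  rw [le_abs]; unfold redCoeff
  split <;> rename_i h
  · have : ((i:ℕ):ℝ) ≤ (n0:ℝ) - 1 := by
      have : (i:ℕ) + 1 ≤ n0 := h
      have := (Nat.cast_le (α := ℝ)).2 this
      push_cast at this; linarith
    right; linarith
  · have : (n0:ℝ) ≤ ((i:ℕ):ℝ) := by exact_mod_cast Nat.le_of_not_lt h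
    left; linarith

lemma redCoeff_zero (n0 : ℕ) (hn0 : 1 < n0) : redCoeff n0 ⟨0, Nat.mul_pos two_pos (Nat.zero_lt_of_lt hn0)⟩ = -(n0:ℝ) := by
  unfold redCoeff; simp [show (0:ℕ) < n0 by omega]

lemma redCoeff_last (n0 : ℕ) (hn0 : 1 < n0) : redCoeff n0 ⟨2 * n0 - 1, Nat.sub_lt (Nat.mul_pos two_pos (Nat.zero_lt_of_lt hn0)) one_pos⟩ = (n0:ℝ) := by
  unfold redCoeff
  have h : ¬ (2 * n0 - 1 < n0) := by omega
  simp only [h, if_false]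
  have : ((2 * n0 - 1 : ℕ) : ℝ) = 2 * n0 - 1 := by
    push_cast [Nat.cast_sub (by omega : 1 ≤ 2 * n0)]; ring
  rw [this]; ring

lemma redCoeff_abs_le' (n0 : ℕ) (hn0 : 1 < n0) (i : Fin (2 * n0))
    (h0 : i ≠ ⟨0, Nat.mul_pos two_pos (Nat.zero_lt_of_lt hn0)⟩) (h1 : i ≠ ⟨2 * n0 - 1, Nat.sub_lt (Nat.mul_pos two_pos (Nat.zero_lt_of_lt hn0)) one_pos⟩) :
    |redCoeff n0 i| ≤ (n0:ℝ) - 1 := by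
  have hi := i.isLt
  have hv0 : (i:ℕ) ≠ 0 := fun h => h0 (Fin.ext h)
  have hv1 : (i:ℕ) ≠ 2 * n0 - 1 := fun h => h1 (Fin.ext h)
  rw [abs_le]; unfold redCoeff
  split <;> rename_i h
  · have ha : ((i:ℕ):ℝ) < n0 := by exact_mod_cast h
    have hb : (1:ℝ) ≤ ((i:ℕ):ℝ) := by exact_mod_cast Nat.one_le_iff_ne_zero.2 hv0
    constructor <;> linarith
  · have ha : (n0:ℝ) ≤ ((i:ℕ):ℝ) := by exact_mod_cast Nat.le_of_not_lt h
    have hb : ((i:ℕ):ℝ) ≤ 2 * n0 - 2 := by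
      have : (i:ℕ) ≤ 2 * n0 - 2 := by omega
      have := (Nat.cast_le (α := ℝ)).2 this
      push_cast [Nat.cast_sub (by omega : 2 ≤ 2 * n0)] at this
      linarith
    constructor <;> linarith

lemma gmono {p q : ℝ} (hq : 0 < q) (hqp : q < p) :
    (2 * q ^ 2 - 1) / q < (2 * p ^ 2 - 1) / p := by
  rw [div_lt_div_iff₀ hq (hq.trans hqp)]
  nlinarith [mul_pos (sub_pos.2 hqp) (mul_pos hq (hq.trans hqp))]

lemma term_hasDerivAt (k ξ : ℝ) (h : (k * ξ) ^ 2 < 1) :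
    HasDerivAt (fun t => t * Real.sqrt (1 - (k * t) ^ 2))
      ((1 - 2 * (k * ξ) ^ 2) / Real.sqrt (1 - (k * ξ) ^ 2)) ξ := by
  have hpos : 0 < 1 - (k * ξ) ^ 2 := by linarith
  have hs : Real.sqrt (1 - (k * ξ) ^ 2) ≠ 0 := by positivity
  have h1 : HasDerivAt (fun t : ℝ => 1 - (k * t) ^ 2) (-(2 * (k * ξ) * k)) ξ := by
    have := (((hasDerivAt_id ξ).const_mul k).pow 2).const_sub 1
    simpa using this
  have h2 : HasDerivAt (fun t : ℝ => Real.sqrt (1 - (k * t) ^ 2))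
      (-(2 * (k * ξ) * k) / (2 * Real.sqrt (1 - (k * ξ) ^ 2))) ξ :=
    h1.sqrt (ne_of_gt hpos)
  have h3 : HasDerivAt (fun t => t * Real.sqrt (1 - (k * t) ^ 2))
      (1 * Real.sqrt (1 - (k * ξ) ^ 2) + ξ * (-(2 * (k * ξ) * k) / (2 * Real.sqrt (1 - (k * ξ) ^ 2)))) ξ :=
    (hasDerivAt_id' ξ).fun_mul h2
  convert h3 using 1
  have hsq : Real.sqrt (1 - (k * ξ) ^ 2) ^ 2 = 1 - (k * ξ) ^ 2 :=
    Real.sq_sqrt hpos.le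
  generalize Real.sqrt (1 - (k * ξ) ^ 2) = r at hs hsq ⊢
  field_simp
  linear_combination (-1) * hsq

lemma key_term_bound {a ξ m : ℝ} (ha0 : 0 ≤ a) (hm : 0 < m) (hma : m ^ 2 ≤ 1 - a)
    (hξ0 : 0 ≤ ξ) (hξ1 : ξ ≤ 1) :
    |Real.sqrt (1 - a) - ξ * Real.sqrt (1 - a * ξ ^ 2)| ≤ (1 - ξ) * (1 + 2 / m) := by
  set q := Real.sqrt (1 - a) with hqdef
  set p := Real.sqrt (1 - a * ξ ^ 2) with hpdef
  have ha1 : a ≤ 1 := by nlinarith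
  have hξ2 : ξ ^ 2 ≤ 1 := by nlinarith
  have haξ : a * ξ ^ 2 ≤ a := mul_le_of_le_one_right ha0 hξ2
  have hq2 : q ^ 2 = 1 - a := Real.sq_sqrt (by nlinarith)
  have hp2 : p ^ 2 = 1 - a * ξ ^ 2 := Real.sq_sqrt (by nlinarith)
  have hq0 : 0 ≤ q := Real.sqrt_nonneg _
  have hp0 : 0 ≤ p := Real.sqrt_nonneg _
  have hqp : q ≤ p := Real.sqrt_le_sqrt (by nlinarith)
  have hmq : m ≤ q := (Real.le_sqrt' hm).2 (by linarith)
  have hq1 : q ≤ 1 := Real.sqrt_le_one.2 (by nlinarith)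
  have h2m : 0 < 2 / m := by positivity
  rw [abs_le]
  constructor
  · rw [neg_le, neg_sub]
    have hkey : (p - q) * (p + q) = a * (1 - ξ ^ 2) := by nlinarith
    have hppq : 0 ≤ p - q := sub_nonneg.2 hqp
    have hmpq : m ≤ p + q := by nlinarith
    have hA : (p - q) * m ≤ (p - q) * (p + q) := mul_le_mul_of_nonneg_left hmpq hppq
    have hB : a * (1 - ξ ^ 2) ≤ 2 * (1 - ξ) := by nlinarith
    have hpq : (p - q) * m ≤ 2 * (1 - ξ) := by nlinarith
    have h3 : ξ * p - q ≤ p - q := by nlinarith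
    have h4 : p - q ≤ 2 * (1 - ξ) / m := by rw [le_div_iff₀ hm]; exact hpq
    have h5 : 2 * (1 - ξ) / m ≤ (1 - ξ) * (1 + 2 / m) := by
      have he : 2 * (1 - ξ) / m = (1 - ξ) * (2 / m) := by ring
      rw [he]
      exact mul_le_mul_of_nonneg_left (by linarith) (by linarith)
    linarith
  · have h3 : q - ξ * p ≤ (1 - ξ) * q := by nlinarith [mul_le_mul_of_nonneg_left hqp hξ0]
    calc q - ξ * p ≤ (1 - ξ) * q := h3
      _ ≤ (1 - ξ) * (1 + 2 / m) := mul_le_mul_of_nonneg_left (by linarith) (by linarith)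

/-- closed-form candidate for the derivative of `χ^σ`. -/
noncomputable def chiD (n0 : ℕ) (σ : Fin (2 * n0) → ℝ) (ξ : ℝ) : ℝ :=
  (1 / n0) * (1 + ∑ i, σ i *
    ((1 - 2 * (redCoeff n0 i * ξ / n0) ^ 2) / Real.sqrt (1 - (redCoeff n0 i * ξ / n0) ^ 2)))

lemma chi_continuous (n0 : ℕ) (σ : Fin (2 * n0) → ℝ) : Continuous (chi n0 σ) := by
  unfold chi
  apply Continuous.mul (by fun_prop)
  apply Continuous.add continuous_const
  apply continuous_finset_sum
  intro i _
  exact (continuous_const.mul ((by fun_prop : Continuous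
    (fun ξ : ℝ => 1 - (redCoeff n0 i * ξ / n0) ^ 2)).sqrt))

lemma chi_eq (n0 : ℕ) (σ : Fin (2 * n0) → ℝ) : chi n0 σ = fun ξ =>
    (1 / (n0:ℝ)) * (ξ + ∑ i, σ i * (ξ * Real.sqrt (1 - (redCoeff n0 i * ξ / n0) ^ 2))) := by
  funext ξ
  unfold chi
  have h : ∑ i, σ i * (ξ * Real.sqrt (1 - (redCoeff n0 i * ξ / n0) ^ 2))
      = ξ * ∑ i, σ i * Real.sqrt (1 - (redCoeff n0 i * ξ / n0) ^ 2) := by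
    rw [Finset.mul_sum]; exact Finset.sum_congr rfl fun i _ => by ring
  rw [h]; ring

lemma sq_lt_one_of (n0 : ℕ) (hn0 : 0 < n0) (i : Fin (2 * n0)) {ξ : ℝ}
    (hξ0 : 0 ≤ ξ) (hξ1 : ξ < 1) : (redCoeff n0 i * ξ / n0) ^ 2 < 1 := by
  have hn : (0:ℝ) < n0 := by exact_mod_cast hn0
  have habs : |redCoeff n0 i * ξ / n0| < 1 := by
    rw [abs_div, abs_mul, abs_of_nonneg hξ0, abs_of_pos hn, div_lt_one hn]
    calc |redCoeff n0 i| * ξ ≤ (n0:ℝ) * ξ :=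
          mul_le_mul_of_nonneg_right (redCoeff_abs_le n0 i) hξ0
      _ < n0 * 1 := by exact mul_lt_mul_of_pos_left hξ1 hn
      _ = n0 := mul_one _
  calc (redCoeff n0 i * ξ / n0) ^ 2 = |redCoeff n0 i * ξ / n0| ^ 2 := (sq_abs _).symm
    _ < 1 := by nlinarith [abs_nonneg (redCoeff n0 i * ξ / n0)]

lemma chi_hasDerivAt (n0 : ℕ) (hn0 : 0 < n0) (σ : Fin (2 * n0) → ℝ) {ξ : ℝ}
    (hξ0 : 0 ≤ ξ) (hξ1 : ξ < 1) : HasDerivAt (chi n0 σ) (chiD n0 σ ξ) ξ := by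
  rw [chi_eq]
  have hterm : ∀ i ∈ Finset.univ, HasDerivAt
      (fun t => σ i * (t * Real.sqrt (1 - (redCoeff n0 i * t / n0) ^ 2)))
      (σ i * ((1 - 2 * (redCoeff n0 i * ξ / n0) ^ 2) /
        Real.sqrt (1 - (redCoeff n0 i * ξ / n0) ^ 2))) ξ := by
    intro i _
    have h := term_hasDerivAt (redCoeff n0 i / n0) ξ (by
      rw [div_mul_eq_mul_div]; exact sq_lt_one_of n0 hn0 i hξ0 hξ1)
    simp only [div_mul_eq_mul_div] at h
    exact h.const_mul (σ i)
  have hsum := HasDerivAt.sum hterm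
  have := ((hasDerivAt_id ξ).add hsum).const_mul (1 / (n0:ℝ))
  simpa [chiD] using this

lemma chiD_strictAntiOn (n0 : ℕ) (hn0 : 1 < n0) (σ : Fin (2 * n0) → ℝ)
    (hσ1 : ∀ i, σ i = 1) : StrictAntiOn (chiD n0 σ) (Set.Ioo 0 1) := by
  intro x hx y hy hxy
  have hn : (0:ℝ) < n0 := by exact_mod_cast Nat.zero_lt_of_lt hn0
  have hsum : ∀ i ∈ Finset.univ, σ i *
      ((1 - 2 * (redCoeff n0 i * y / n0) ^ 2) / Real.sqrt (1 - (redCoeff n0 i * y / n0) ^ 2)) <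
      σ i * ((1 - 2 * (redCoeff n0 i * x / n0) ^ 2) /
        Real.sqrt (1 - (redCoeff n0 i * x / n0) ^ 2)) := by
    intro i _
    rw [hσ1 i, one_mul, one_mul]
    set c := redCoeff n0 i with hc
    have hc1 : 1 ≤ |c| := redCoeff_abs_ge n0 i
    have hc2 : 1 ≤ c ^ 2 := by nlinarith [sq_abs c, abs_nonneg c]
    have hy2 : (c * y / n0) ^ 2 < 1 := sq_lt_one_of n0 (by omega) i hy.1.le hy.2
    have hx2 : (c * x / n0) ^ 2 < 1 := sq_lt_one_of n0 (by omega) i hx.1.le hx.2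
    have hlt : (c * x / n0) ^ 2 < (c * y / n0) ^ 2 := by
      have hxy2 : x ^ 2 < y ^ 2 := by nlinarith [hx.1, hxy]
      have hcy : (c * x) ^ 2 < (c * y) ^ 2 := by
        nlinarith [mul_lt_mul_of_pos_left hxy2 (show (0:ℝ) < c ^ 2 by linarith)]
      rw [div_pow, div_pow]
      exact (div_lt_div_iff_of_pos_right (by positivity)).2 hcy
    set p := Real.sqrt (1 - (c * x / n0) ^ 2) with hp
    set q := Real.sqrt (1 - (c * y / n0) ^ 2) with hqq
    have hq0 : 0 < q := Real.sqrt_pos.2 (by linarith)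
    have hqp : q < p := Real.sqrt_lt_sqrt (by linarith) (by linarith)
    have hq2 : q ^ 2 = 1 - (c * y / n0) ^ 2 := Real.sq_sqrt (by linarith)
    have hp2 : p ^ 2 = 1 - (c * x / n0) ^ 2 := Real.sq_sqrt (by linarith)
    have e1 : 1 - 2 * (c * y / n0) ^ 2 = 2 * q ^ 2 - 1 := by rw [hq2]; ring
    have e2 : 1 - 2 * (c * x / n0) ^ 2 = 2 * p ^ 2 - 1 := by rw [hp2]; ring
    rw [e1, e2]
    exact gmono hq0 hqp
  haveI : Nonempty (Fin (2 * n0)) := ⟨⟨0, Nat.mul_pos two_pos (Nat.zero_lt_of_lt hn0)⟩⟩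
  have hS := Finset.sum_lt_sum_of_nonempty Finset.univ_nonempty hsum
  unfold chiD
  apply mul_lt_mul_of_pos_left (by linarith) (by positivity)

lemma chiD_le (n0 : ℕ) (hn0 : 1 < n0) (σ : Fin (2 * n0) → ℝ)
    (hσ1 : ∀ i, σ i = 1) {ξ : ℝ} (hξ : ξ ∈ Set.Ioo (0:ℝ) 1) :
    chiD n0 σ ξ ≤ 2 + (1 / n0) * ((1 - 2 * ξ ^ 2) / Real.sqrt (1 - ξ ^ 2)) := by
  have hn : (0:ℝ) < n0 := by exact_mod_cast Nat.zero_lt_of_lt hn0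
  set i0 : Fin (2 * n0) := ⟨0, Nat.mul_pos two_pos (Nat.zero_lt_of_lt hn0)⟩ with hi0
  set f : Fin (2 * n0) → ℝ := fun i => σ i *
    ((1 - 2 * (redCoeff n0 i * ξ / n0) ^ 2) / Real.sqrt (1 - (redCoeff n0 i * ξ / n0) ^ 2))
    with hf
  have hfi0 : f i0 = (1 - 2 * ξ ^ 2) / Real.sqrt (1 - ξ ^ 2) := by
    have hc : redCoeff n0 i0 * ξ / n0 = -ξ := by
      rw [hi0, redCoeff_zero n0 hn0]; field_simp
    rw [hf]; simp only [hσ1 i0, one_mul, hc, neg_sq]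
  have hbound : ∀ i ∈ Finset.univ.erase i0, f i ≤ 1 := by
    intro i _
    rw [hf]; simp only [hσ1 i, one_mul]
    set u := (redCoeff n0 i * ξ / n0) ^ 2 with hu
    have hu0 : 0 ≤ u := sq_nonneg _
    have hu1 : u < 1 := sq_lt_one_of n0 (by omega) i hξ.1.le hξ.2
    set s := Real.sqrt (1 - u) with hs
    have hs0 : 0 < s := Real.sqrt_pos.2 (by linarith)
    have hs2 : s ^ 2 = 1 - u := Real.sq_sqrt (by linarith)
    have hs1 : s ≤ 1 := Real.sqrt_le_one.2 (by linarith)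
    rw [div_le_one hs0]
    nlinarith
  have hsplit : ∑ i, f i = f i0 + ∑ i ∈ Finset.univ.erase i0, f i :=
    (Finset.add_sum_erase Finset.univ f (Finset.mem_univ i0)).symm
  have hcard : (Finset.univ.erase i0).card = 2 * n0 - 1 := by
    rw [Finset.card_erase_of_mem (Finset.mem_univ i0), Finset.card_univ, Fintype.card_fin]
  have hsumle : ∑ i ∈ Finset.univ.erase i0, f i ≤ 2 * (n0:ℝ) - 1 := by
    calc ∑ i ∈ Finset.univ.erase i0, f i ≤ (Finset.univ.erase i0).card • (1:ℝ) :=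
          Finset.sum_le_card_nsmul _ _ 1 hbound
      _ = ((2 * n0 - 1 : ℕ) : ℝ) := by rw [hcard]; simp
      _ = 2 * (n0:ℝ) - 1 := by
          push_cast [Nat.cast_sub (by omega : 1 ≤ 2 * n0)]; ring
  have hn' : (n0:ℝ) ≠ 0 := ne_of_gt hn
  unfold chiD
  rw [show (∑ i, σ i * ((1 - 2 * (redCoeff n0 i * ξ / n0) ^ 2) /
      Real.sqrt (1 - (redCoeff n0 i * ξ / n0) ^ 2))) = ∑ i, f i from rfl, hsplit, hfi0]
  have hgen : ∀ E : ℝ, (1:ℝ) / n0 * (1 + (E + (2 * (n0:ℝ) - 1)))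
      = 2 + 1 / n0 * E := by intro E; field_simp; ring
  have := hgen ((1 - 2 * ξ ^ 2) / Real.sqrt (1 - ξ ^ 2))
  rw [← this]
  apply mul_le_mul_of_nonneg_left (by linarith) (by positivity)

lemma chiD_half_pos (n0 : ℕ) (hn0 : 1 < n0) (σ : Fin (2 * n0) → ℝ)
    (hσ1 : ∀ i, σ i = 1) : 0 < chiD n0 σ (1/2) := by
  have hn : (0:ℝ) < n0 := by exact_mod_cast Nat.zero_lt_of_lt hn0
  have hsum : 0 ≤ ∑ i, σ i * ((1 - 2 * (redCoeff n0 i * (1/2) / n0) ^ 2) /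
      Real.sqrt (1 - (redCoeff n0 i * (1/2) / n0) ^ 2)) := by
    apply Finset.sum_nonneg
    intro i _
    rw [hσ1 i, one_mul]
    have habs := redCoeff_abs_le n0 i
    have hc2 : redCoeff n0 i ^ 2 ≤ (n0:ℝ) ^ 2 := by
      nlinarith [abs_nonneg (redCoeff n0 i), sq_abs (redCoeff n0 i)]
    have hu : (redCoeff n0 i * (1/2) / n0) ^ 2 ≤ 1/4 := by
      rw [div_pow]
      rw [div_le_iff₀ (by positivity)]
      nlinarith
    apply div_nonneg (by linarith) (Real.sqrt_nonneg _)
  unfold chiD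
  positivity

lemma E_tendsto : Tendsto (fun ξ : ℝ => (1 - 2 * ξ ^ 2) / Real.sqrt (1 - ξ ^ 2))
    (nhdsWithin 1 (Set.Iio 1)) atBot := by
  have hmem : Set.Ioo (3/4 : ℝ) 1 ∈ nhdsWithin (1:ℝ) (Set.Iio 1) :=
    Ioo_mem_nhdsLT_of_mem (by constructor <;> norm_num)
  have h1 : Tendsto (fun ξ : ℝ => Real.sqrt (1 - ξ ^ 2)) (nhdsWithin 1 (Set.Iio 1))
      (nhdsWithin 0 (Set.Ioi 0)) := by
    rw [tendsto_nhdsWithin_iff]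
    constructor
    · have hc : Continuous (fun ξ : ℝ => Real.sqrt (1 - ξ ^ 2)) := by fun_prop
      have := hc.tendsto 1
      simp only [one_pow, sub_self, Real.sqrt_zero] at this
      exact this.mono_left nhdsWithin_le_nhds
    · filter_upwards [hmem] with ξ hξ
      exact Real.sqrt_pos.2 (by nlinarith [hξ.1, hξ.2])
  have h2 : Tendsto (fun ξ : ℝ => (Real.sqrt (1 - ξ ^ 2))⁻¹) (nhdsWithin 1 (Set.Iio 1))
      atTop := tendsto_inv_nhdsGT_zero.comp h1
  have h3 : Tendsto (fun ξ : ℝ => -(1/8 : ℝ) * (Real.sqrt (1 - ξ ^ 2))⁻¹)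
      (nhdsWithin 1 (Set.Iio 1)) atBot :=
    (tendsto_const_mul_atBot_of_neg (by norm_num)).2 h2
  apply tendsto_atBot_mono' _ _ h3
  filter_upwards [hmem] with ξ hξ
  have hs : 0 < Real.sqrt (1 - ξ ^ 2) := Real.sqrt_pos.2 (by nlinarith [hξ.1, hξ.2])
  have hnum : 1 - 2 * ξ ^ 2 ≤ -(1/8 : ℝ) := by nlinarith [hξ.1, hξ.2]
  calc (1 - 2 * ξ ^ 2) / Real.sqrt (1 - ξ ^ 2)
      ≤ (-(1/8 : ℝ)) / Real.sqrt (1 - ξ ^ 2) := by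
        exact (div_le_div_iff_of_pos_right hs).2 hnum
    _ = -(1/8 : ℝ) * (Real.sqrt (1 - ξ ^ 2))⁻¹ := by rw [div_eq_mul_inv]

set_option maxHeartbeats 2000000 in
lemma exists_better (n0 : ℕ) (hn0 : 1 < n0) (σ : Fin (2 * n0) → ℝ)
    (hσ : ∀ i, σ i = 1 ∨ σ i = -1)
    (hs0 : σ ⟨0, Nat.mul_pos two_pos (Nat.zero_lt_of_lt hn0)⟩ = σ ⟨2 * n0 - 1, Nat.sub_lt (Nat.mul_pos two_pos (Nat.zero_lt_of_lt hn0)) one_pos⟩)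
    (hsgn : 0 ≤ σ ⟨0, Nat.mul_pos two_pos (Nat.zero_lt_of_lt hn0)⟩ * chi n0 σ 1) :
    ∃ ξ1 ∈ Set.Ioo (0:ℝ) 1, |chi n0 σ 1| < |chi n0 σ ξ1| ∧ 0 < |chi n0 σ ξ1| := by
  have hn : (0:ℝ) < n0 := by exact_mod_cast Nat.zero_lt_of_lt hn0
  have hn2 : (2:ℝ) ≤ n0 := by exact_mod_cast hn0
  set i0 : Fin (2 * n0) := ⟨0, Nat.mul_pos two_pos (Nat.zero_lt_of_lt hn0)⟩ with hi0def
  set il : Fin (2 * n0) := ⟨2 * n0 - 1, Nat.sub_lt (Nat.mul_pos two_pos (Nat.zero_lt_of_lt hn0)) one_pos⟩ with hildef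
  have hil0 : il ≠ i0 := by
    simp only [hi0def, hildef, Fin.ext_iff, ne_eq]
    omega
  set s := σ i0 with hsdef
  have hss : s * s = 1 := by rcases hσ i0 with h | h <;> rw [hsdef, h] <;> norm_num
  have hsabs : |s| = 1 := by rcases hσ i0 with h | h <;> rw [hsdef, h] <;> norm_num
  set S := (Finset.univ.erase i0).erase il with hSdef
  have hilmem : il ∈ Finset.univ.erase i0 := Finset.mem_erase.2 ⟨hil0, Finset.mem_univ il⟩
  have hsil : σ il = s := hs0.symm
  have hsplit : ∀ ξ : ℝ, chi n0 σ ξ = (ξ / n0) * (1 + 2 * s * Real.sqrt (1 - ξ ^ 2)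
      + ∑ i ∈ S, σ i * Real.sqrt (1 - (redCoeff n0 i * ξ / n0) ^ 2)) := by
    intro ξ
    unfold chi
    rw [← Finset.add_sum_erase _ _ (Finset.mem_univ i0),
        ← Finset.add_sum_erase _ _ hilmem, ← hSdef]
    have e0 : redCoeff n0 i0 * ξ / n0 = -ξ := by
      rw [hi0def, redCoeff_zero n0 hn0]; field_simp
    have el : redCoeff n0 il * ξ / n0 = ξ := by
      rw [hildef, redCoeff_last n0 hn0]; field_simp
    rw [e0, el, neg_sq, hsil, ← hsdef]
    ring
  obtain ⟨δ, hδdef⟩ : ∃ δ : ℝ, δ = 1 / (100 * (n0:ℝ) ^ 4) := ⟨_, rfl⟩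
  have hδpos : 0 < δ := by rw [hδdef]; positivity
  have hδpos' : 0 < δ := by rw [hδdef]; positivity
  have hδsmall : δ ≤ 1 / 1600 := by
    rw [hδdef]
    apply one_div_le_one_div_of_le (by norm_num)
    have h4 : (2:ℝ) ^ 4 ≤ (n0:ℝ) ^ 4 := pow_le_pow_left₀ (by norm_num) hn2 4
    nlinarith
  obtain ⟨ξ1, hξ1def⟩ : ∃ x : ℝ, x = 1 - δ := ⟨_, rfl⟩
  have hξ1mem : ξ1 ∈ Set.Ioo (0:ℝ) 1 := ⟨by rw [hξ1def]; linarith, by rw [hξ1def]; linarith⟩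
  have hhalf : 1/2 ≤ ξ1 := by rw [hξ1def]; linarith
  set t1 := ∑ i ∈ S, σ i * Real.sqrt (1 - (redCoeff n0 i * 1 / n0) ^ 2) with ht1def
  set tξ := ∑ i ∈ S, σ i * Real.sqrt (1 - (redCoeff n0 i * ξ1 / n0) ^ 2) with htξdef
  have hterm : ∀ i ∈ S, |σ i * Real.sqrt (1 - (redCoeff n0 i * 1 / n0) ^ 2)
      - ξ1 * (σ i * Real.sqrt (1 - (redCoeff n0 i * ξ1 / n0) ^ 2))|
      ≤ (1 - ξ1) * (1 + 2 * n0) := by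
    intro i hiS
    have hmem := Finset.mem_erase.1 hiS
    have hil' : i ≠ il := hmem.1
    have hi0' : i ≠ i0 := (Finset.mem_erase.1 hmem.2).1
    have hc : |redCoeff n0 i| ≤ (n0:ℝ) - 1 := by
      apply redCoeff_abs_le' n0 hn0 i
      · rw [← hi0def]; exact hi0'
      · rw [← hildef]; exact hil'
    set a := (redCoeff n0 i / n0) ^ 2 with hadef
    have ha0 : 0 ≤ a := sq_nonneg _
    have hc2 : (redCoeff n0 i) ^ 2 ≤ ((n0:ℝ) - 1) ^ 2 := by
      nlinarith [sq_abs (redCoeff n0 i), abs_nonneg (redCoeff n0 i)]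
    have hma : (1/(n0:ℝ)) ^ 2 ≤ 1 - a := by
      rw [hadef, div_pow, div_pow]
      rw [le_sub_iff_add_le, ← add_div, div_le_one (by positivity)]
      nlinarith
    have hkb := key_term_bound ha0 (show (0:ℝ) < 1/n0 by positivity) hma
      hξ1mem.1.le hξ1mem.2.le
    have e1 : (redCoeff n0 i * 1 / n0) ^ 2 = a := by rw [hadef]; ring
    have e2 : (redCoeff n0 i * ξ1 / n0) ^ 2 = a * ξ1 ^ 2 := by rw [hadef]; ring
    have habsσ : |σ i| = 1 := by rcases hσ i with h | h <;> rw [h] <;> norm_num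
    have e3 : 2 / ((1:ℝ)/n0) = 2 * n0 := by field_simp
    have e4 : σ i * Real.sqrt (1 - a) - ξ1 * (σ i * Real.sqrt (1 - a * ξ1 ^ 2))
        = σ i * (Real.sqrt (1 - a) - ξ1 * Real.sqrt (1 - a * ξ1 ^ 2)) := by ring
    rw [e1, e2, e4, abs_mul, habsσ, one_mul]
    exact hkb.trans_eq (by rw [e3])
  have hcardle : (S.card : ℝ) ≤ 2 * n0 := by
    have h1 : S.card ≤ Fintype.card (Fin (2 * n0)) := Finset.card_le_univ S
    rw [Fintype.card_fin] at h1
    exact_mod_cast h1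
  have hsum : |t1 - ξ1 * tξ| ≤ 2 * n0 * ((1 - ξ1) * (1 + 2 * n0)) := by
    have heq : t1 - ξ1 * tξ = ∑ i ∈ S, (σ i * Real.sqrt (1 - (redCoeff n0 i * 1 / n0) ^ 2)
        - ξ1 * (σ i * Real.sqrt (1 - (redCoeff n0 i * ξ1 / n0) ^ 2))) := by
      rw [ht1def, htξdef, Finset.mul_sum, ← Finset.sum_sub_distrib]
    rw [heq]
    calc |∑ i ∈ S, (σ i * Real.sqrt (1 - (redCoeff n0 i * 1 / n0) ^ 2)
        - ξ1 * (σ i * Real.sqrt (1 - (redCoeff n0 i * ξ1 / n0) ^ 2)))|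
        ≤ ∑ i ∈ S, |σ i * Real.sqrt (1 - (redCoeff n0 i * 1 / n0) ^ 2)
          - ξ1 * (σ i * Real.sqrt (1 - (redCoeff n0 i * ξ1 / n0) ^ 2))| :=
          Finset.abs_sum_le_sum_abs _ _
      _ ≤ S.card • ((1 - ξ1) * (1 + 2 * n0)) := Finset.sum_le_card_nsmul _ _ _ hterm
      _ ≤ 2 * n0 * ((1 - ξ1) * (1 + 2 * n0)) := by
          rw [nsmul_eq_mul]
          apply mul_le_mul_of_nonneg_right hcardle
          apply mul_nonneg (by linarith [hξ1mem.2]) (by positivity)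
  have hΔ : |(1/(n0:ℝ)) * (1 + t1) - (ξ1/n0) * (1 + tξ)| ≤ 7 * n0 * (1 - ξ1) := by
    have e : (1/(n0:ℝ)) * (1 + t1) - (ξ1/n0) * (1 + tξ)
        = (1/n0) * ((1 - ξ1) + (t1 - ξ1 * tξ)) := by ring
    rw [e, abs_mul, abs_of_pos (show (0:ℝ) < 1/n0 by positivity)]
    have h1ξ : (0:ℝ) ≤ 1 - ξ1 := by linarith [hξ1mem.2]
    have h2 : |(1 - ξ1) + (t1 - ξ1 * tξ)| ≤ (1 - ξ1) + 2 * n0 * ((1 - ξ1) * (1 + 2 * n0)) := by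
      calc |(1 - ξ1) + (t1 - ξ1 * tξ)| ≤ |1 - ξ1| + |t1 - ξ1 * tξ| := abs_add_le _ _
        _ ≤ (1 - ξ1) + 2 * n0 * ((1 - ξ1) * (1 + 2 * n0)) := by
            rw [abs_of_nonneg h1ξ]; linarith
    calc (1/(n0:ℝ)) * |(1 - ξ1) + (t1 - ξ1 * tξ)|
        ≤ (1/n0) * ((1 - ξ1) + 2 * n0 * ((1 - ξ1) * (1 + 2 * n0))) :=
          mul_le_mul_of_nonneg_left h2 (by positivity)
      _ ≤ 7 * n0 * (1 - ξ1) := by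
          rw [one_div, inv_mul_le_iff₀ hn]
          nlinarith [mul_nonneg h1ξ (show (0:ℝ) ≤ 3 * n0 ^ 2 - 2 * n0 - 1 by nlinarith)]
  have hgain : 1/(10 * (n0:ℝ) ^ 3) ≤ 2 * (ξ1/n0) * Real.sqrt (1 - ξ1 ^ 2) := by
    have hs1 : Real.sqrt (1/(100 * (n0:ℝ) ^ 4)) = 1/(10 * n0 ^ 2) := by
      rw [show (1:ℝ)/(100 * n0 ^ 4) = (1/(10 * n0 ^ 2)) ^ 2 by ring]
      exact Real.sqrt_sq (by positivity)
    have h12 : δ ≤ 1 - ξ1 ^ 2 := by rw [hξ1def]; nlinarith [hδpos, hhalf]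
    have hs2 : 1/(10 * (n0:ℝ) ^ 2) ≤ Real.sqrt (1 - ξ1 ^ 2) := by
      rw [← hs1, ← hδdef]
      exact Real.sqrt_le_sqrt h12
    have h1 : 2 * (ξ1/n0) * (1/(10 * (n0:ℝ) ^ 2)) ≤ 2 * (ξ1/n0) * Real.sqrt (1 - ξ1 ^ 2) := by
      apply mul_le_mul_of_nonneg_left hs2
      positivity
    have h2 : 1/(10 * (n0:ℝ) ^ 3) ≤ 2 * (ξ1/n0) * (1/(10 * n0 ^ 2)) := by
      have e : 2 * (ξ1/n0) * (1/(10 * (n0:ℝ) ^ 2)) = ξ1/(5 * n0 ^ 3) := by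
        field_simp; ring
      rw [e, div_le_div_iff₀ (by positivity) (by positivity)]
      nlinarith [pow_pos hn 3]
    linarith
  have hloss : s * ((1/(n0:ℝ)) * (1 + t1) - (ξ1/n0) * (1 + tξ)) ≤ 7 * n0 * (1 - ξ1) :=
    calc s * ((1/(n0:ℝ)) * (1 + t1) - (ξ1/n0) * (1 + tξ))
        ≤ |s * ((1/(n0:ℝ)) * (1 + t1) - (ξ1/n0) * (1 + tξ))| := le_abs_self _
      _ = |(1/(n0:ℝ)) * (1 + t1) - (ξ1/n0) * (1 + tξ)| := by rw [abs_mul, hsabs, one_mul]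
      _ ≤ 7 * n0 * (1 - ξ1) := hΔ
  have hmain : s * chi n0 σ 1 < s * chi n0 σ ξ1 := by
    have e : s * chi n0 σ ξ1 - s * chi n0 σ 1
        = 2 * (ξ1/n0) * Real.sqrt (1 - ξ1 ^ 2)
          - s * ((1/(n0:ℝ)) * (1 + t1) - (ξ1/n0) * (1 + tξ)) := by
      rw [hsplit ξ1, hsplit 1]
      have h11 : Real.sqrt (1 - (1:ℝ) ^ 2) = 0 := by norm_num
      rw [h11, ← ht1def, ← htξdef]
      linear_combination (2 * (ξ1/(n0:ℝ)) * Real.sqrt (1 - ξ1 ^ 2)) * hss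
    have hnum : 7 * (n0:ℝ) * (1 - ξ1) < 1/(10 * n0 ^ 3) := by
      have e2 : 7 * (n0:ℝ) * (1 - ξ1) = 7/(100 * n0 ^ 3) := by
        rw [hξ1def, hδdef]; field_simp; ring
      rw [e2, div_lt_div_iff₀ (by positivity) (by positivity)]
      nlinarith [pow_pos hn 3]
    linarith
  refine ⟨ξ1, hξ1mem, ?_, ?_⟩
  · have habs1 : |chi n0 σ 1| = s * chi n0 σ 1 := by
      rw [← abs_of_nonneg hsgn, abs_mul, hsabs, one_mul]
    have habsξ : s * chi n0 σ ξ1 ≤ |chi n0 σ ξ1| :=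
      calc s * chi n0 σ ξ1 ≤ |s * chi n0 σ ξ1| := le_abs_self _
        _ = |chi n0 σ ξ1| := by rw [abs_mul, hsabs, one_mul]
    rw [habs1]; linarith
  · have habsξ : s * chi n0 σ ξ1 ≤ |chi n0 σ ξ1| :=
      calc s * chi n0 σ ξ1 ≤ |s * chi n0 σ ξ1| := le_abs_self _
        _ = |chi n0 σ ξ1| := by rw [abs_mul, hsabs, one_mul]
    linarith
/-- (a) If `σ_1 = σ_{2n_0} = 1` and `χ^σ(1) ≥ 0`, or `σ_1 = σ_{2n_0} = −1`
and `χ^σ(1) ≤ 0`, then `|χ^σ|` has a local maximum in `(0,1)` (a supercritical saddle-node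
bifurcation occurs at `K = a/|χ^σ(ξ_0)|`). (b) If `σ_i = 1` for all `i`, then `χ^σ > 0` on
`(0,1]`, its derivative is strictly decreasing on `(0,1)` and tends to `−∞` at `1`, and
`χ^σ` has exactly one local maximum and no local minimum in `(0,1)`. -/
theorem stmt10 (n0 : ℕ) (hn0 : 1 < n0)
    (σ : Fin (2 * n0) → ℝ) (hσ : ∀ i, σ i = 1 ∨ σ i = -1) :
    (((σ ⟨0, by omega⟩ = 1 ∧ σ ⟨2 * n0 - 1, by omega⟩ = 1 ∧ 0 ≤ chi n0 σ 1) ∨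
      (σ ⟨0, by omega⟩ = -1 ∧ σ ⟨2 * n0 - 1, by omega⟩ = -1 ∧ chi n0 σ 1 ≤ 0)) →
      ∃ ξ0 ∈ Set.Ioo (0:ℝ) 1, IsLocalMax (fun ξ => |chi n0 σ ξ|) ξ0) ∧
    ((∀ i, σ i = 1) →
      (∀ ξ ∈ Set.Ioc (0:ℝ) 1, 0 < chi n0 σ ξ) ∧
      StrictAntiOn (deriv (chi n0 σ)) (Set.Ioo (0:ℝ) 1) ∧
      Tendsto (deriv (chi n0 σ)) (nhdsWithin 1 (Set.Iio 1)) atBot ∧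
      (∃! ξ0 : ℝ, ξ0 ∈ Set.Ioo (0:ℝ) 1 ∧ IsLocalMax (chi n0 σ) ξ0) ∧
      (∀ ξ ∈ Set.Ioo (0:ℝ) 1, ¬ IsLocalMin (chi n0 σ) ξ)) := by
  constructor
  · -- Part (a)
    intro hcase
    have hs0 : σ ⟨0, by omega⟩ = σ ⟨2 * n0 - 1, by omega⟩ ∧
        0 ≤ σ ⟨0, by omega⟩ * chi n0 σ 1 := by
      rcases hcase with ⟨h1, h2, h3⟩ | ⟨h1, h2, h3⟩ <;> rw [h1, h2] <;>
        exact ⟨rfl, by nlinarith⟩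
    obtain ⟨ξ1, hξ1mem, hlt, hposξ1⟩ := exists_better n0 hn0 σ hσ hs0.1 hs0.2
    have hcont : Continuous fun ξ => |chi n0 σ ξ| := (chi_continuous n0 σ).abs
    obtain ⟨ξ0, hξ0mem, hmax⟩ := isCompact_Icc.exists_isMaxOn
      (nonempty_Icc.2 zero_le_one) hcont.continuousOn
    have hm1 := hmax (show ξ1 ∈ Set.Icc (0:ℝ) 1 from ⟨hξ1mem.1.le, hξ1mem.2.le⟩)
    have hchi0 : chi n0 σ 0 = 0 := by simp [chi]
    have hne0 : ξ0 ≠ 0 := by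
      intro h
      rw [h] at hm1
      simp only [hchi0, abs_zero] at hm1
      exact absurd hm1 (not_le.2 hposξ1)
    have hne1 : ξ0 ≠ 1 := by
      intro h
      rw [h] at hm1
      exact absurd hm1 (not_le.2 hlt)
    refine ⟨ξ0, ⟨lt_of_le_of_ne hξ0mem.1 (Ne.symm hne0), lt_of_le_of_ne hξ0mem.2 hne1⟩, ?_⟩
    exact hmax.isLocalMax (Icc_mem_nhds (lt_of_le_of_ne hξ0mem.1 (Ne.symm hne0))
      (lt_of_le_of_ne hξ0mem.2 hne1))
  · -- Part (b)
    intro hσ1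
    have hn : (0:ℝ) < n0 := by exact_mod_cast Nat.zero_lt_of_lt hn0
    have hderiv : ∀ x ∈ Set.Ioo (0:ℝ) 1, deriv (chi n0 σ) x = chiD n0 σ x :=
      fun x hx => (chi_hasDerivAt n0 (by omega) σ hx.1.le hx.2).deriv
    have hpos : ∀ ξ ∈ Set.Ioc (0:ℝ) 1, 0 < chi n0 σ ξ := by
      intro ξ hξ
      have hsum : 0 ≤ ∑ i, σ i * Real.sqrt (1 - (redCoeff n0 i * ξ / n0) ^ 2) :=
        Finset.sum_nonneg fun i _ => by rw [hσ1 i, one_mul]; exact Real.sqrt_nonneg _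
      exact mul_pos (div_pos hξ.1 hn) (by linarith)
    have hanti : StrictAntiOn (deriv (chi n0 σ)) (Set.Ioo (0:ℝ) 1) := by
      intro x hx y hy hxy
      rw [hderiv x hx, hderiv y hy]
      exact chiD_strictAntiOn n0 hn0 σ hσ1 hx hy hxy
    have hIoo : Set.Ioo (0:ℝ) 1 ∈ nhdsWithin (1:ℝ) (Set.Iio 1) :=
      Ioo_mem_nhdsLT_of_mem ⟨zero_lt_one, le_refl 1⟩
    have htend : Tendsto (deriv (chi n0 σ)) (nhdsWithin 1 (Set.Iio 1)) atBot := by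
      have hb : Tendsto (fun ξ : ℝ => 2 + (1/(n0:ℝ)) *
          ((1 - 2 * ξ ^ 2) / Real.sqrt (1 - ξ ^ 2))) (nhdsWithin 1 (Set.Iio 1)) atBot := by
        apply tendsto_atBot_add_const_left
        exact (tendsto_const_mul_atBot_of_pos (by positivity)).2 E_tendsto
      apply tendsto_atBot_mono' _ ?_ hb
      filter_upwards [hIoo] with ξ hξ
      rw [hderiv ξ hξ]
      exact chiD_le n0 hn0 σ hσ1 hξ
    have hev : ∀ᶠ ξ in nhdsWithin (1:ℝ) (Set.Iio 1),
        deriv (chi n0 σ) ξ < 0 ∧ ξ ∈ Set.Ioo (1/2:ℝ) 1 :=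
      (htend.eventually (eventually_lt_atBot 0)).and
        (eventually_of_mem (Ioo_mem_nhdsLT_of_mem ⟨by norm_num, le_refl 1⟩) fun x hx => hx)
    obtain ⟨b, hbneg, hbmem⟩ := hev.exists
    have hb01 : b ∈ Set.Ioo (0:ℝ) 1 := ⟨by linarith [hbmem.1], hbmem.2⟩
    have hbneg' : chiD n0 σ b < 0 := by rw [← hderiv b hb01]; exact hbneg
    have hhalfpos := chiD_half_pos n0 hn0 σ hσ1
    have hab : (1/2:ℝ) ≤ b := hbmem.1.le
    have hdw : ∀ x ∈ Set.Icc (1/2:ℝ) b,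
        HasDerivWithinAt (chi n0 σ) (chiD n0 σ x) (Set.Icc (1/2:ℝ) b) x :=
      fun x hx => (chi_hasDerivAt n0 (by omega) σ (by linarith [hx.1])
        (lt_of_le_of_lt hx.2 hbmem.2)).hasDerivWithinAt
    obtain ⟨ξ0, hξ0mem, hξ0⟩ :=
      exists_hasDerivWithinAt_eq_of_lt_of_gt hab hdw hhalfpos hbneg'
    have hξ0' : ξ0 ∈ Set.Ioo (0:ℝ) 1 := ⟨by linarith [hξ0mem.1], lt_trans hξ0mem.2 hbmem.2⟩
    have hmono : StrictMonoOn (chi n0 σ) (Set.Icc 0 ξ0) := by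
      apply strictMonoOn_of_deriv_pos (convex_Icc _ _) (chi_continuous n0 σ).continuousOn
      intro x hx
      rw [interior_Icc] at hx
      have hx' : x ∈ Set.Ioo (0:ℝ) 1 := ⟨hx.1, lt_trans hx.2 hξ0'.2⟩
      rw [hderiv x hx']
      have := chiD_strictAntiOn n0 hn0 σ hσ1 hx' hξ0' hx.2
      rw [hξ0] at this
      exact this
    have hanti2 : StrictAntiOn (chi n0 σ) (Set.Icc ξ0 1) := by
      apply strictAntiOn_of_deriv_neg (convex_Icc _ _) (chi_continuous n0 σ).continuousOn
      intro x hx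
      rw [interior_Icc] at hx
      have hx' : x ∈ Set.Ioo (0:ℝ) 1 := ⟨lt_trans hξ0'.1 hx.1, hx.2⟩
      rw [hderiv x hx']
      have := chiD_strictAntiOn n0 hn0 σ hσ1 hξ0' hx' hx.1
      rw [hξ0] at this
      exact this
    have hmax : IsLocalMax (chi n0 σ) ξ0 := by
      have hnhds : Set.Ioo (0:ℝ) 1 ∈ nhds ξ0 := Ioo_mem_nhds hξ0'.1 hξ0'.2
      filter_upwards [hnhds] with x hx
      rcases le_total x ξ0 with h | h
      · exact hmono.monotoneOn ⟨hx.1.le, h⟩ ⟨hξ0'.1.le, le_refl _⟩ h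
      · exact hanti2.antitoneOn ⟨le_refl _, hξ0'.2.le⟩ ⟨h, hx.2.le⟩ h
    have huniq : ∀ y ∈ Set.Ioo (0:ℝ) 1, deriv (chi n0 σ) y = 0 → y = ξ0 := by
      intro y hy hdy
      have : chiD n0 σ y = chiD n0 σ ξ0 := by rw [← hderiv y hy, hdy, hξ0]
      exact (chiD_strictAntiOn n0 hn0 σ hσ1).injOn hy hξ0' this
    have hnomin : ∀ ξ ∈ Set.Ioo (0:ℝ) 1, ¬ IsLocalMin (chi n0 σ) ξ := by
      intro ξ hξ hmin
      have hξeq : ξ = ξ0 := huniq ξ hξ hmin.deriv_eq_zero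
      subst hξeq
      have hIoo' : Set.Ioo (0:ℝ) ξ ∈ nhdsWithin ξ (Set.Iio ξ) :=
        Ioo_mem_nhdsLT_of_mem ⟨hξ.1, le_refl _⟩
      have hev2 := (hmin.filter_mono nhdsWithin_le_nhds).and
        (eventually_of_mem hIoo' fun x hx => hx)
      obtain ⟨x, hle, hx⟩ := hev2.exists
      have : chi n0 σ x < chi n0 σ ξ :=
        hmono ⟨hx.1.le, hx.2.le⟩ ⟨hξ.1.le, le_refl _⟩ hx.2
      linarith
    exact ⟨hpos, hanti, htend, ⟨ξ0, ⟨hξ0', hmax⟩,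
      fun y hy => huniq y hy.1 hy.2.deriv_eq_zero⟩, hnomin⟩
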